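/- For R > 0, let N be a standard Gaussian random variable and define T_R = E[(N - max(-R, min(N, R)))^2]. Then T_R ≤ sqrt(2/π) · (1/R) · exp(-R²/2). -/

import Mathlib

/-!
Completing the square gives `φ x = φ R · exp (-R (x - R)) · exp (-(x - R)² / 2)` for the standard
Gaussian density `φ`, and `t² exp (-t² / 2) ≤ 1`, so on the upper tail
`φ x (x - R)² ≤ φ R · exp (-R (x - R))`, whose integral over `(R, ∞)` is `φ R / R`.
The lower tail is the mirror image, hence `T_R ≤ 2 φ R / R = √(2/π) · R⁻¹ · exp (-R² / 2)`.
-/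

open MeasureTheory ProbabilityTheory Real Set

lemma sq_mul_exp_neg_sq_div_two_le_one (t : ℝ) : t ^ 2 * exp (-t ^ 2 / 2) ≤ 1 := by
  rw [neg_div, exp_neg, ← div_eq_mul_inv, div_le_one (exp_pos _)]
  nlinarith [quadratic_le_exp_of_nonneg (by positivity : 0 ≤ t ^ 2 / 2), sq_nonneg (t ^ 2 / 2 - 1)]

lemma gaussianPDFReal_zero_one (x : ℝ) :
    gaussianPDFReal 0 1 x = (√(2 * π))⁻¹ * exp (-x ^ 2 / 2) := by
  simp [gaussianPDFReal]

lemma gaussianPDFReal_zero_one_neg (x : ℝ) :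
    gaussianPDFReal 0 1 (-x) = gaussianPDFReal 0 1 x := by
  simp [gaussianPDFReal_zero_one]

lemma gaussianPDFReal_mul_sq_sub_le (a x : ℝ) :
    gaussianPDFReal 0 1 x * (x - a) ^ 2 ≤ gaussianPDFReal 0 1 a * exp (-a * (x - a)) := by
  have hsplit : exp (-x ^ 2 / 2) =
      exp (-a ^ 2 / 2) * exp (-a * (x - a)) * exp (-(x - a) ^ 2 / 2) := by
    rw [← exp_add, ← exp_add]; ring_nf
  have h := sq_mul_exp_neg_sq_div_two_le_one (x - a)
  rw [gaussianPDFReal_zero_one, gaussianPDFReal_zero_one, hsplit]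
  calc _ = (√(2 * π))⁻¹ * exp (-a ^ 2 / 2) * exp (-a * (x - a)) *
          ((x - a) ^ 2 * exp (-(x - a) ^ 2 / 2)) := by ring
    _ ≤ (√(2 * π))⁻¹ * exp (-a ^ 2 / 2) * exp (-a * (x - a)) * 1 := by gcongr
    _ = _ := by ring

noncomputable def gaussianTailMajorant (R : ℝ) : ℝ → ℝ :=
  (Ioi R).indicator fun x ↦ gaussianPDFReal 0 1 R * exp (-R * (x - R))

lemma gaussianTailMajorant_nonneg (R x : ℝ) : 0 ≤ gaussianTailMajorant R x :=
  indicator_nonneg (fun _ _ ↦ mul_nonneg (gaussianPDFReal_nonneg _ _ _) (exp_pos _).le) x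

lemma gaussianTailMajorant_eq (R : ℝ) : gaussianTailMajorant R =
    (Ioi R).indicator fun x ↦ gaussianPDFReal 0 1 R * exp (R ^ 2) * exp (-R * x) := by
  unfold gaussianTailMajorant
  congr 1
  funext x
  rw [mul_assoc, ← exp_add]
  ring_nf

lemma integrable_gaussianTailMajorant {R : ℝ} (hR : 0 < R) :
    Integrable (gaussianTailMajorant R) := by
  rw [gaussianTailMajorant_eq, integrable_indicator_iff measurableSet_Ioi]
  exact (integrableOn_exp_mul_Ioi (neg_neg_of_pos hR) R).const_mul _

lemma integral_gaussianTailMajorant {R : ℝ} (hR : 0 < R) :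
    ∫ x, gaussianTailMajorant R x = gaussianPDFReal 0 1 R / R := by
  rw [gaussianTailMajorant_eq, integral_indicator measurableSet_Ioi, integral_const_mul,
    integral_exp_mul_Ioi (neg_neg_of_pos hR), mul_assoc, neg_div_neg_eq, mul_div_assoc', ← exp_add,
    show R ^ 2 + -R * R = 0 by ring, exp_zero, mul_one_div]

lemma gaussianPDFReal_mul_sq_sub_clamp_le {R : ℝ} (hR : 0 ≤ R) (x : ℝ) :
    gaussianPDFReal 0 1 x * (x - max (-R) (min x R)) ^ 2 ≤
      gaussianTailMajorant R x + gaussianTailMajorant R (-x) := by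
  have h₁ := gaussianTailMajorant_nonneg R x
  have h₂ := gaussianTailMajorant_nonneg R (-x)
  rcases lt_or_ge R x with hx | hx
  · have hclamp : max (-R) (min x R) = R := by rw [min_eq_right hx.le, max_eq_right (by linarith)]
    calc _ ≤ gaussianTailMajorant R x := by
          rw [hclamp, gaussianTailMajorant, indicator_of_mem (show x ∈ Ioi R from hx)]
          exact gaussianPDFReal_mul_sq_sub_le R x
      _ ≤ _ := le_add_of_nonneg_right h₂
  rcases lt_or_ge x (-R) with hx' | hx'
  · have hclamp : max (-R) (min x R) = -R := by rw [min_eq_left hx, max_eq_left hx'.le]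
    calc _ = gaussianPDFReal 0 1 (-x) * (-x - R) ^ 2 := by
          rw [hclamp, gaussianPDFReal_zero_one_neg]; ring
      _ ≤ gaussianTailMajorant R (-x) := by
          rw [gaussianTailMajorant, indicator_of_mem (show -x ∈ Ioi R by simp; linarith)]
          exact gaussianPDFReal_mul_sq_sub_le R (-x)
      _ ≤ _ := le_add_of_nonneg_left h₁
  · rw [min_eq_left hx, max_eq_right hx', sub_self, zero_pow two_ne_zero, mul_zero]
    exact add_nonneg h₁ h₂

lemma two_mul_inv_sqrt_two_mul_pi : 2 * (√(2 * π))⁻¹ = √(2 / π) := by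
  rw [show 2 / π = 2 ^ 2 / (2 * π) by field_simp, sqrt_div' _ (by positivity),
    sqrt_sq zero_le_two, div_eq_mul_inv]

/-- For `R > 0`, if `N` is a standard Gaussian random variable, then the expected squared
truncation error `T_R = E[(N - max (-R) (min N R))^2]` satisfies
`T_R ≤ √(2/π) · (1/R) · exp(-R²/2)`. -/
theorem stmt_0 (R : ℝ) (hR : 0 < R) :
    ∫ x, (x - max (-R) (min x R)) ^ 2 ∂(gaussianReal 0 1)
      ≤ Real.sqrt (2 / π) * (1 / R) * Real.exp (-R ^ 2 / 2) := by
  have hM := integrable_gaussianTailMajorant hR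
  calc ∫ x, (x - max (-R) (min x R)) ^ 2 ∂(gaussianReal 0 1)
      = ∫ x, gaussianPDFReal 0 1 x * (x - max (-R) (min x R)) ^ 2 :=
        integral_gaussianReal_eq_integral_smul one_ne_zero
    _ ≤ ∫ x, (gaussianTailMajorant R x + gaussianTailMajorant R (-x)) :=
        integral_mono_of_nonneg
          (ae_of_all _ fun x ↦ mul_nonneg (gaussianPDFReal_nonneg _ _ x) (sq_nonneg _))
          (hM.add hM.comp_neg) (ae_of_all _ (gaussianPDFReal_mul_sq_sub_clamp_le hR.le))
    _ = 2 * (√(2 * π))⁻¹ * (1 / R) * exp (-R ^ 2 / 2) := by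
        rw [integral_add hM hM.comp_neg, integral_neg_eq_self, integral_gaussianTailMajorant hR,
          gaussianPDFReal_zero_one]
        ring
    _ = _ := by rw [two_mul_inv_sqrt_two_mul_pi]
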